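/- Death Leaps Principle: In Toads and Frogs, any position containing exactly one empty square, in which the only legal move available to either player is a jump (i.e., the empty square is not adjacent on its left to a Toad with a free move nor adjacent on its right to a Frog with a free move — every legal move is a Toad jumping a Frog or a Frog jumping a Toad into the empty square), has game value 0. -/

import Mathlib

namespace SetTheory

universe u

/-- Pre-games, as in the older Mathlib (`SetTheory.PGame`, removed since). -/
inductive PGame : Type (u + 1)
  | mk : ∀ α β : Type u, (α → PGame) → (β → PGame) → PGame

namespace PGame

/-- Inner recursion (on the right argument) of `leLF`. -/
def leLFAux {xl xr : Type u} (xL : xl → PGame.{u}) (xR : xr → PGame.{u})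
    (IHl : xl → PGame.{u} → Prop × Prop) (IHr : xr → PGame.{u} → Prop × Prop) :
    PGame.{u} → Prop × Prop
  | mk yl yr yL yR =>
    ((∀ i, (IHl i (mk yl yr yL yR)).2) ∧ ∀ j, (leLFAux xL xR IHl IHr (yR j)).2,
      (∃ i, (leLFAux xL xR IHl IHr (yL i)).1) ∨ ∃ j, (IHr j (mk yl yr yL yR)).1)

/-- The pair `(x ≤ y, x ⧏ y)`, defined as in the older Mathlib. -/
def leLF : PGame.{u} → PGame.{u} → Prop × Prop
  | mk _ _ xL xR => leLFAux xL xR (fun i => leLF (xL i)) (fun j => leLF (xR j))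

instance : LE PGame.{u} :=
  ⟨fun x y => (leLF x y).1⟩

/-- Equivalence of pre-games: `x ≤ y ∧ y ≤ x`, as in the older Mathlib. -/
def Equiv (x y : PGame.{u}) : Prop :=
  x ≤ y ∧ y ≤ x

instance : HasEquiv PGame.{u} :=
  ⟨Equiv⟩

instance : Zero PGame.{u} :=
  ⟨mk PEmpty PEmpty PEmpty.elim PEmpty.elim⟩

/-- Negation of pre-games, as in the older Mathlib. -/
def neg : PGame.{u} → PGame.{u}
  | mk _ _ xL xR => mk _ _ (fun j => neg (xR j)) (fun i => neg (xL i))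

instance : Neg PGame.{u} :=
  ⟨neg⟩

end PGame

end SetTheory

open SetTheory

inductive Cell : Type
  | T | F | E
deriving DecidableEq

/-- Positions reachable from `l` by a single Toad (Left) move:
a Toad steps right into an empty square, or jumps over one adjacent Frog
into the empty square beyond. -/
def toadMoves : List Cell → List (List Cell)
  | [] => []
  | c :: rest =>
    (match c, rest with
     | Cell.T, Cell.E :: r => [Cell.E :: Cell.T :: r]
     | Cell.T, Cell.F :: Cell.E :: r => [Cell.E :: Cell.F :: Cell.T :: r]
     | _, _ => []) ++ (toadMoves rest).map (c :: ·)

/-- Positions reachable from `l` by a single Frog (Right) move. -/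
def frogMoves : List Cell → List (List Cell)
  | [] => []
  | c :: rest =>
    (match c, rest with
     | Cell.E, Cell.F :: r => [Cell.F :: Cell.E :: r]
     | Cell.E, Cell.T :: Cell.F :: r => [Cell.F :: Cell.T :: Cell.E :: r]
     | _, _ => []) ++ (frogMoves rest).map (c :: ·)

/-- A weight which strictly decreases with every legal move: each Toad
contributes the number of squares strictly to its right, each Frog the number
of squares strictly to its left. -/
def wt : List Cell → ℕ
  | [] => 0
  | c :: rest =>
    (if c = Cell.T then rest.length else 0) + rest.countP (· = Cell.F) + wt rest

/-- Game tree with fuel; since `wt` strictly decreases along moves and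
positions of weight `0` have no moves, `gameAux n l` is the true game
tree of `l` whenever `wt l ≤ n`. -/
def gameAux : ℕ → List Cell → PGame
  | 0, _ => 0
  | n + 1, l =>
    PGame.mk {m // m ∈ toadMoves l} {m // m ∈ frogMoves l}
      (fun m => gameAux n m.1) (fun m => gameAux n m.1)

/-- The game (PGame) associated to a Toads and Frogs position. -/
def tfGame (l : List Cell) : PGame := gameAux (wt l + 1) l

/-- The game `{x | y}` with a single Left option `x` and single Right option `y`. -/
def gmk (x y : PGame) : PGame :=
  PGame.mk PUnit PUnit (fun _ => x) (fun _ => y)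

/-- The canonical game of a natural number. -/
def natGame : ℕ → PGame
  | 0 => 0
  | n + 1 => PGame.mk PUnit PEmpty (fun _ => natGame n) (fun x => x.elim)

/-- The canonical game of an integer. -/
def intGame : ℤ → PGame
  | Int.ofNat n => natGame n
  | Int.negSucc n => -natGame (n + 1)

/-- `(TF)^b` : the block `TF` repeated `b` times. -/
def tfBlock (b : ℕ) : List Cell := (List.replicate b [Cell.T, Cell.F]).flatten

/-!
Since there is a single empty square, a jump `TFE → EFT` by Left can be answered by Right's slide
`EFT → FET`, and a jump `ETF → FTE` by Right by Left's slide `FTE → FET`. Either way the result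
`… F E T …` again has a lone empty square that nobody can slide into. By induction on the
weight `wt`, which drops with every move, the second player therefore always wins.
-/

namespace SetTheory.PGame

universe u

def LeftMoves : PGame.{u} → Type u
  | mk l _ _ _ => l

def RightMoves : PGame.{u} → Type u
  | mk _ r _ _ => r

def moveLeft : (x : PGame.{u}) → x.LeftMoves → PGame.{u}
  | mk _ _ L _ => L

def moveRight : (x : PGame.{u}) → x.RightMoves → PGame.{u}
  | mk _ _ _ R => R

theorem le_zero_of_forall_exists {x : PGame.{u}}
    (h : ∀ i, ∃ j, (x.moveLeft i).moveRight j ≤ 0) : x ≤ 0 := by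
  obtain ⟨xl, xr, xL, xR⟩ := x
  have lf_zero : ∀ (y : PGame.{u}) j, y.moveRight j ≤ 0 → (leLF y 0).2
    | mk _ _ _ _, j, hj => Or.inr ⟨j, hj⟩
  exact ⟨fun i => (h i).elim (lf_zero _), fun j => j.elim⟩

theorem zero_le_of_forall_exists {x : PGame.{u}}
    (h : ∀ j, ∃ i, 0 ≤ (x.moveRight j).moveLeft i) : 0 ≤ x := by
  obtain ⟨xl, xr, xL, xR⟩ := x
  have zero_lf : ∀ (y : PGame.{u}) i, 0 ≤ y.moveLeft i → (leLF 0 y).2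
    | mk _ _ _ _, i, hi => Or.inl ⟨i, hi⟩
  exact ⟨fun i => i.elim, fun j => (h j).elim (zero_lf _)⟩

end SetTheory.PGame

theorem List.eq_and_eq_of_append_cons_eq {α : Type*} {x : α} :
    ∀ {a b a' b' : List α}, x ∉ a → x ∉ b → a ++ x :: b = a' ++ x :: b' → a = a' ∧ b = b'
  | [], _, [], _, _, _, h => ⟨rfl, by simpa using h⟩
  | [], _, c :: a', b', _, hb, h => by
    obtain ⟨rfl, rfl⟩ := List.cons_eq_cons.1 h
    simp at hb
  | c :: a, _, [], _, ha, _, h => by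
    obtain ⟨rfl, -⟩ := List.cons_eq_cons.1 h
    simp at ha
  | c :: a, _, c' :: a', _, ha, hb, h => by
    obtain ⟨rfl, htail⟩ := List.cons_eq_cons.1 h
    obtain ⟨rfl, rfl⟩ := eq_and_eq_of_append_cons_eq (List.not_mem_of_not_mem_cons ha) hb htail
    exact ⟨rfl, rfl⟩

open Cell

theorem mem_toadMoves {l m : List Cell} (h : m ∈ toadMoves l) :
    (∃ a b, l = a ++ T :: E :: b ∧ m = a ++ E :: T :: b) ∨
      ∃ a b, l = a ++ T :: F :: E :: b ∧ m = a ++ E :: F :: T :: b := by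
  induction l generalizing m with
  | nil => simp [toadMoves] at h
  | cons c rest ih =>
    rcases List.mem_append.1 h with h | h
    · rcases c with _ | _ | _ <;> rcases rest with _ | ⟨_ | _ | _, _ | ⟨_ | _ | _, r⟩⟩ <;>
        simp at h <;> subst h
      all_goals first
        | exact Or.inl ⟨[], _, rfl, rfl⟩
        | exact Or.inr ⟨[], _, rfl, rfl⟩
    · obtain ⟨m, hm, rfl⟩ := List.mem_map.1 h
      rcases ih hm with ⟨a, b, rfl, rfl⟩ | ⟨a, b, rfl, rfl⟩
      exacts [Or.inl ⟨c :: a, b, rfl, rfl⟩, Or.inr ⟨c :: a, b, rfl, rfl⟩]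

theorem mem_frogMoves {l m : List Cell} (h : m ∈ frogMoves l) :
    (∃ a b, l = a ++ E :: F :: b ∧ m = a ++ F :: E :: b) ∨
      ∃ a b, l = a ++ E :: T :: F :: b ∧ m = a ++ F :: T :: E :: b := by
  induction l generalizing m with
  | nil => simp [frogMoves] at h
  | cons c rest ih =>
    rcases List.mem_append.1 h with h | h
    · rcases c with _ | _ | _ <;> rcases rest with _ | ⟨_ | _ | _, _ | ⟨_ | _ | _, r⟩⟩ <;>
        simp at h <;> subst h
      all_goals first
        | exact Or.inl ⟨[], _, rfl, rfl⟩
        | exact Or.inr ⟨[], _, rfl, rfl⟩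
    · obtain ⟨m, hm, rfl⟩ := List.mem_map.1 h
      rcases ih hm with ⟨a, b, rfl, rfl⟩ | ⟨a, b, rfl, rfl⟩
      exacts [Or.inl ⟨c :: a, b, rfl, rfl⟩, Or.inr ⟨c :: a, b, rfl, rfl⟩]

theorem append_mem_toadMoves_append (a : List Cell) {l m : List Cell} (h : m ∈ toadMoves l) :
    a ++ m ∈ toadMoves (a ++ l) := by
  induction a with
  | nil => exact h
  | cons c a ih => exact List.mem_append_right _ (List.mem_map_of_mem ih)

theorem append_mem_frogMoves_append (a : List Cell) {l m : List Cell} (h : m ∈ frogMoves l) :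
    a ++ m ∈ frogMoves (a ++ l) := by
  induction a with
  | nil => exact h
  | cons c a ih => exact List.mem_append_right _ (List.mem_map_of_mem ih)

theorem toadSlide_mem_toadMoves (a b : List Cell) : a ++ E :: T :: b ∈ toadMoves (a ++ T :: E :: b) :=
  append_mem_toadMoves_append a (by simp [toadMoves])

theorem frogSlide_mem_frogMoves (a b : List Cell) : a ++ F :: E :: b ∈ frogMoves (a ++ E :: F :: b) :=
  append_mem_frogMoves_append a (by simp [frogMoves])

theorem wt_append (x y : List Cell) : wt (x ++ y) =
    wt x + wt y + x.countP (· = T) * y.length + y.countP (· = F) * x.length := by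
  induction x with
  | nil => simp [wt]
  | cons c x ih =>
    simp only [List.cons_append, wt, List.countP_cons, List.countP_append,
      List.length_append, List.length_cons]
    cases c <;> simp [ih] <;> ring

theorem wt_append_append_lt (a b : List Cell) {x y : List Cell} (hlen : x.length = y.length)
    (hT : x.countP (· = T) = y.countP (· = T)) (hF : x.countP (· = F) = y.countP (· = F))
    (h : wt x < wt y) : wt (a ++ (x ++ b)) < wt (a ++ (y ++ b)) := by
  simp only [wt_append, List.countP_append, List.length_append, hlen, hT, hF]
  omega

theorem wt_lt_of_mem_toadMoves {l m : List Cell} (h : m ∈ toadMoves l) : wt m < wt l := by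
  rcases mem_toadMoves h with ⟨a, b, rfl, rfl⟩ | ⟨a, b, rfl, rfl⟩
  · exact wt_append_append_lt a b (x := [E, T]) (y := [T, E]) rfl rfl rfl (by decide)
  · exact wt_append_append_lt a b (x := [E, F, T]) (y := [T, F, E]) rfl rfl rfl (by decide)

theorem wt_lt_of_mem_frogMoves {l m : List Cell} (h : m ∈ frogMoves l) : wt m < wt l := by
  rcases mem_frogMoves h with ⟨a, b, rfl, rfl⟩ | ⟨a, b, rfl, rfl⟩
  · exact wt_append_append_lt a b (x := [F, E]) (y := [E, F]) rfl rfl rfl (by decide)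
  · exact wt_append_append_lt a b (x := [F, T, E]) (y := [E, T, F]) rfl rfl rfl (by decide)

/-- The position `a ++ E :: b` has a single empty square, and neither player can slide into it. -/
structure IsDeathLeap (a b : List Cell) : Prop where
  not_mem_left : E ∉ a
  not_mem_right : E ∉ b
  getLast?_ne : a.getLast? ≠ some T
  head?_ne : b.head? ≠ some F

theorem isDeathLeap_append_singleton_F_cons_T {a b : List Cell} (ha : E ∉ a) (hb : E ∉ b) :
    IsDeathLeap (a ++ [F]) (T :: b) :=
  ⟨by simp [ha], by simp [hb], by simp, by simp⟩

theorem exists_eq_append_cons_isDeathLeap {l : List Cell} (hE : l.count E = 1)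
    (hT : ¬ [T, E] <:+: l) (hF : ¬ [E, F] <:+: l) : ∃ a b, l = a ++ E :: b ∧ IsDeathLeap a b := by
  obtain ⟨a, b, rfl⟩ := List.append_of_mem (List.count_pos_iff.1 (by omega : 0 < l.count E))
  have hab : a.count E = 0 ∧ b.count E = 0 := by
    simp only [List.count_append, List.count_cons_self] at hE
    omega
  refine ⟨a, b, rfl, List.count_eq_zero.1 hab.1, List.count_eq_zero.1 hab.2, ?_, ?_⟩
  · rw [Ne, List.getLast?_eq_some_iff]
    rintro ⟨a', rfl⟩
    exact hT ⟨a', b, by simp⟩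
  · rw [Ne, List.head?_eq_some_iff]
    rintro ⟨b', rfl⟩
    exact hF ⟨a, b', by simp⟩

namespace IsDeathLeap

variable {a b m : List Cell}

theorem exists_of_mem_toadMoves (h : IsDeathLeap a b) (hm : m ∈ toadMoves (a ++ E :: b)) :
    ∃ a', a = a' ++ [T, F] ∧ m = a' ++ E :: F :: T :: b := by
  rcases mem_toadMoves hm with ⟨a', b', hl, rfl⟩ | ⟨a', b', hl, rfl⟩
  · rw [show a' ++ T :: E :: b' = (a' ++ [T]) ++ E :: b' by simp] at hl
    obtain ⟨rfl, -⟩ := List.eq_and_eq_of_append_cons_eq h.not_mem_left h.not_mem_right hl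
    exact absurd (by simp) h.getLast?_ne
  · rw [show a' ++ T :: F :: E :: b' = (a' ++ [T, F]) ++ E :: b' by simp] at hl
    obtain ⟨rfl, rfl⟩ := List.eq_and_eq_of_append_cons_eq h.not_mem_left h.not_mem_right hl
    exact ⟨a', rfl, rfl⟩

theorem exists_of_mem_frogMoves (h : IsDeathLeap a b) (hm : m ∈ frogMoves (a ++ E :: b)) :
    ∃ b', b = T :: F :: b' ∧ m = a ++ F :: T :: E :: b' := by
  rcases mem_frogMoves hm with ⟨a', b', hl, rfl⟩ | ⟨a', b', hl, rfl⟩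
  · obtain ⟨rfl, rfl⟩ := List.eq_and_eq_of_append_cons_eq h.not_mem_left h.not_mem_right hl
    exact absurd (by simp) h.head?_ne
  · obtain ⟨rfl, rfl⟩ := List.eq_and_eq_of_append_cons_eq h.not_mem_left h.not_mem_right hl
    exact ⟨b', rfl, rfl⟩

theorem gameAux_equiv_zero {n : ℕ} (h : IsDeathLeap a b) (hn : wt (a ++ E :: b) < n) :
    gameAux n (a ++ E :: b) ≈ 0 := by
  induction n using Nat.strong_induction_on generalizing a b with
  | _ n ih =>
  obtain _ | n := n
  · omega
  refine ⟨PGame.le_zero_of_forall_exists ?_, PGame.zero_le_of_forall_exists ?_⟩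
  · rintro ⟨m, hm⟩
    have hwm := wt_lt_of_mem_toadMoves hm
    obtain ⟨a', rfl, rfl⟩ := h.exists_of_mem_toadMoves hm
    obtain ⟨k, rfl⟩ : ∃ k, n = k + 1 := ⟨n - 1, by omega⟩
    have hr : (a' ++ [F]) ++ E :: T :: b ∈ frogMoves (a' ++ E :: F :: T :: b) := by
      simpa using frogSlide_mem_frogMoves a' (T :: b)
    have hreply := isDeathLeap_append_singleton_F_cons_T
      (fun h' : E ∈ a' => h.not_mem_left (by simp [h'])) h.not_mem_right
    exact ⟨⟨_, hr⟩, (ih k (by omega) hreply (by have := wt_lt_of_mem_frogMoves hr; omega)).1⟩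
  · rintro ⟨m, hm⟩
    have hwm := wt_lt_of_mem_frogMoves hm
    obtain ⟨b', rfl, rfl⟩ := h.exists_of_mem_frogMoves hm
    obtain ⟨k, rfl⟩ : ∃ k, n = k + 1 := ⟨n - 1, by omega⟩
    have hr : (a ++ [F]) ++ E :: T :: b' ∈ toadMoves (a ++ F :: T :: E :: b') := by
      simpa using toadSlide_mem_toadMoves (a ++ [F]) b'
    have hreply := isDeathLeap_append_singleton_F_cons_T
      h.not_mem_left (fun h' : E ∈ b' => h.not_mem_right (by simp [h']))
    exact ⟨⟨_, hr⟩, (ih k (by omega) hreply (by have := wt_lt_of_mem_toadMoves hr; omega)).2⟩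

end IsDeathLeap

/-- **Death Leaps Principle**: a position with exactly one empty square in which
neither player has a simple (non-jump) move -- i.e. every legal move is a jump --
has game value `0`. -/
theorem death_leaps_principle (l : List Cell)
    (hE : l.count Cell.E = 1)
    (hT : ¬ [Cell.T, Cell.E] <:+: l)
    (hF : ¬ [Cell.E, Cell.F] <:+: l) :
    tfGame l ≈ 0 := by
  obtain ⟨a, b, rfl, h⟩ := exists_eq_append_cons_isDeathLeap hE hT hF
  exact h.gameAux_equiv_zero (Nat.lt_succ_self _)
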